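/- Fix n ≥ 2, an index 1 ≤ i < n with j = i+1, and a real number q. Let 𝓔ₙ be the set of pairs (k,l) with 1 ≤ k < l ≤ n, and define three real matrices with rows and columns indexed by 𝓔ₙ, specifying each row as a linear combination of the standard basis vectors e_{k'l'}: (i) S_i: row (i,j) is q²·e_{ij}; row (k,l) is e_{kl} if {k,l} ∩ {i,j} = ∅; row (i,l) is e_{jl} if l > j; row (k,i) is e_{kj} if k < i; row (k,j) is (q²−q)·e_{ij} + q·e_{ki} + (1−q)·e_{kj} if k < i; row (j,l) is (q²−q)·e_{ij} + q·e_{il} + (1−q)·e_{jl} if l > j. (ii) P_i: row (k,l) is e_{τ(k)τ(l)}, where τ is the transposition swapping i and j and the indices τ(k), τ(l) are reordered increasingly. (iii) R′_i: row (i,j) is q²·e_{ij}; row (k,l) is e_{kl} whenever {k,l} ∩ {i,j} = ∅ or {k,l} contains i but not j; row (k,l) is (q²−q)·e_{ij} + q·e_{jm} + (1−q)·e_{im} whenever {k,l} = {j,m} with m ∉ {i,j}. Then S_i = R′_i · P_i, where the product is matrix multiplication with the convention that row (k,l) of a product M·N is the result of applying N to row (k,l) of M. -/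

import Mathlib

/-- The index set `𝓔ₙ` of edges: pairs `(k,l)` with `k < l` in `Fin n`. -/
abbrev EdgeIdx (n : ℕ) : Type := {p : Fin n × Fin n // p.1 < p.2}

/-- The standard basis vector `e_{ab}` of `ℝ^{𝓔ₙ}`, viewed symmetrically in `a, b`
(with the convention `e_{mm} = 0`). -/
def eVec {n : ℕ} (a b : Fin n) : EdgeIdx n → ℝ :=
  fun c => if (c.1.1 = a ∧ c.1.2 = b) ∨ (c.1.1 = b ∧ c.1.2 = a) then 1 else 0

/-- The matrix `S_i` of the standard braid generator `s_{i,i+1}` (here `j = i+1`) in the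
simplicial representation (the LKB representation at `t = 1`), given row-wise. -/
def simpGenMatrix (n : ℕ) (i j : Fin n) (q : ℝ) : Matrix (EdgeIdx n) (EdgeIdx n) ℝ :=
  fun r c =>
    if r.1.1 = i ∧ r.1.2 = j then q ^ 2 * eVec i j c
    else if r.1.1 = i then eVec j r.1.2 c
    else if r.1.2 = i then eVec r.1.1 j c
    else if r.1.2 = j then
      (q ^ 2 - q) * eVec i j c + q * eVec r.1.1 i c + (1 - q) * eVec r.1.1 j c
    else if r.1.1 = j then
      (q ^ 2 - q) * eVec i j c + q * eVec i r.1.2 c + (1 - q) * eVec j r.1.2 c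
    else eVec r.1.1 r.1.2 c

/-- The permutation matrix `P_i` describing the relabeling of edges induced by the
transposition swapping `i` and `j`. -/
def permMatrix (n : ℕ) (i j : Fin n) : Matrix (EdgeIdx n) (EdgeIdx n) ℝ :=
  fun r c => eVec (Equiv.swap i j r.1.1) (Equiv.swap i j r.1.2) c

/-- The edge rescaling matrix `R_i = R^{i,j}_{rc(i,j)}` (with `j = i+1`), rescaling the
edge `e_{ij}` by `q` while fixing the edges of the right complement. -/
def rcRescaleMatrix (n : ℕ) (i j : Fin n) (q : ℝ) : Matrix (EdgeIdx n) (EdgeIdx n) ℝ :=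
  fun r c =>
    if r.1.1 = i ∧ r.1.2 = j then q ^ 2 * eVec i j c
    else if r.1.1 = i then
      (q ^ 2 - q) * eVec i j c + q * eVec i r.1.2 c + (1 - q) * eVec j r.1.2 c
    else if r.1.2 = i then
      (q ^ 2 - q) * eVec i j c + q * eVec i r.1.1 c + (1 - q) * eVec j r.1.1 c
    else eVec r.1.1 r.1.2 c

/-- The edge rescaling matrix `R′_i = R^{i,j}_{lc(i,j)}` (with `j = i+1`), rescaling the
edge `e_{ij}` by `q` while fixing the edges of the left complement. -/
def lcRescaleMatrix (n : ℕ) (i j : Fin n) (q : ℝ) : Matrix (EdgeIdx n) (EdgeIdx n) ℝ :=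
  fun r c =>
    if r.1.1 = i ∧ r.1.2 = j then q ^ 2 * eVec i j c
    else if r.1.1 = j then
      (q ^ 2 - q) * eVec i j c + q * eVec j r.1.2 c + (1 - q) * eVec i r.1.2 c
    else if r.1.2 = j then
      (q ^ 2 - q) * eVec i j c + q * eVec j r.1.1 c + (1 - q) * eVec i r.1.1 c
    else eVec r.1.1 r.1.2 c


/-!
Every row of `R′_i` is a linear combination of the vectors `e_{ab}`, and right multiplication
by `P_i` sends `e_{ab}` to `e_{τ(a)τ(b)}`. Hence row `(k,l)` of `R′_i · P_i` is row `(k,l)` of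
`R′_i` with all labels relabelled by `τ`, and comparing with `S_i` is a check over the six
kinds of rows.
-/

open Matrix

section
variable {n : ℕ}

lemma eVec_comm (a b : Fin n) : eVec a b = eVec b a := by
  funext c
  simp [eVec, or_comm]

@[simp]
lemma eVec_self (a : Fin n) : eVec a a = 0 := by
  funext c
  simp only [eVec, or_self, Pi.zero_apply, ite_eq_right_iff, one_ne_zero, imp_false, not_and]
  intro h₁ h₂
  exact c.2.ne (h₁.trans h₂.symm)

lemma eVec_vecMul {m : Type*} {a b : Fin n} (hab : a < b) (M : Matrix (EdgeIdx n) m ℝ) :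
    eVec a b ᵥ* M = M ⟨(a, b), hab⟩ := by
  ext x
  rw [vecMul, dotProduct, Finset.sum_eq_single ⟨(a, b), hab⟩]
  · simp [eVec]
  · rintro ⟨⟨k, l⟩, hkl⟩ - hne
    simp only [eVec, ite_mul, one_mul, zero_mul, ite_eq_right_iff]
    rintro (⟨rfl, rfl⟩ | ⟨rfl, rfl⟩)
    · exact absurd rfl hne
    · exact absurd hab hkl.asymm
  · simp

lemma eVec_vecMul_permMatrix (i j a b : Fin n) :
    eVec a b ᵥ* permMatrix n i j = eVec (Equiv.swap i j a) (Equiv.swap i j b) := by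
  rcases lt_trichotomy a b with h | rfl | h
  · exact eVec_vecMul h _
  · simp
  · rw [eVec_comm, eVec_vecMul h, eVec_comm]
    rfl

variable (i j : Fin n) (q : ℝ) {k l : Fin n} (hkl : k < l)

lemma simpGenMatrix_row :
    simpGenMatrix n i j q ⟨(k, l), hkl⟩ =
      if k = i ∧ l = j then q ^ 2 • eVec i j
      else if k = i then eVec j l
      else if l = i then eVec k j
      else if l = j then (q ^ 2 - q) • eVec i j + q • eVec k i + (1 - q) • eVec k j
      else if k = j then (q ^ 2 - q) • eVec i j + q • eVec i l + (1 - q) • eVec j l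
      else eVec k l := by
  funext c
  simp only [simpGenMatrix]
  split_ifs <;> rfl

lemma lcRescaleMatrix_row :
    lcRescaleMatrix n i j q ⟨(k, l), hkl⟩ =
      if k = i ∧ l = j then q ^ 2 • eVec i j
      else if k = j then (q ^ 2 - q) • eVec i j + q • eVec j l + (1 - q) • eVec i l
      else if l = j then (q ^ 2 - q) • eVec i j + q • eVec j k + (1 - q) • eVec i k
      else eVec k l := by
  funext c
  simp only [lcRescaleMatrix]
  split_ifs <;> rfl

end

theorem simpGenMatrix_eq_lcRescaleMatrix_mul_permMatrix {n : ℕ} {i j : Fin n} (hij : i < j)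
    (q : ℝ) : simpGenMatrix n i j q = lcRescaleMatrix n i j q * permMatrix n i j := by
  funext ⟨⟨k, l⟩, hkl⟩
  dsimp only at hkl
  rw [mul_apply_eq_vecMul, simpGenMatrix_row, lcRescaleMatrix_row]
  simp only [apply_ite (· ᵥ* permMatrix n i j), add_vecMul, smul_vecMul, eVec_vecMul_permMatrix,
    Equiv.swap_apply_left, Equiv.swap_apply_right]
  by_cases hki : k = i
  · by_cases hlj : l = j
    · simp [hki, hlj, eVec_comm j]
    · have hli : l ≠ i := by omega
      simp [hki, hij.ne, hlj, Equiv.swap_apply_of_ne_of_ne hli hlj]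
  by_cases hli : l = i
  · have hkj : k ≠ j := by omega
    simp [hki, hli, hkj, hij.ne, Equiv.swap_apply_of_ne_of_ne hki hkj]
  by_cases hlj : l = j
  · have hkj : k ≠ j := by omega
    simp [hij.ne', hki, hlj, hkj, Equiv.swap_apply_of_ne_of_ne hki hkj, eVec_comm j i,
      eVec_comm i k, eVec_comm j k]
  by_cases hkj : k = j
  · simp [hij.ne', hkj, hli, hlj, Equiv.swap_apply_of_ne_of_ne hli hlj, eVec_comm j i]
  · simp [hki, hli, hlj, hkj, Equiv.swap_apply_of_ne_of_ne hki hkj,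
      Equiv.swap_apply_of_ne_of_ne hli hlj]

theorem simpGen_eq_lcRescale_mul_perm_general (n : ℕ) (i j : Fin n)
    (hij : (i : ℕ) + 1 = (j : ℕ)) (q : ℝ) :
    simpGenMatrix n i j q = lcRescaleMatrix n i j q * permMatrix n i j :=
  simpGenMatrix_eq_lcRescaleMatrix_mul_permMatrix (Fin.lt_def.2 (by omega)) q

/-- **`S_i = R′_i · P_i`.** For `j = i+1`, the matrix of the standard braid generator
`s_{i,i+1}` in the simplicial representation factors as the edge rescaling matrix
`R′_i = R^{i,i+1}_{lc(i,i+1)}` times the edge-relabeling permutation matrix `P_i`. -/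
theorem simpGen_eq_lcRescale_mul_perm (n : ℕ) (hn : 2 ≤ n) (i j : Fin n)
    (hij : (i : ℕ) + 1 = (j : ℕ)) (q : ℝ) :
    simpGenMatrix n i j q = lcRescaleMatrix n i j q * permMatrix n i j :=
  simpGen_eq_lcRescale_mul_perm_general n i j hij q
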